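/- The integral I_B(m'') = ∫_m^∞ p(m')ρ(m')p(m''|m') dm' equals p(m'')nH + p(m'')C₁(1 − 2e^{−β(m''−m₀)}) n H(1−H), where H = e^{−(β−a)(m−m₀)} and n = βκ/(β−a). -/

import Mathlib

/-!
With `E x = exp (-(β - a) (x - m₀))`, the density factors `p(m') ρ(m')` combine to `β κ E(m')`, so the
integrand is `β κ p(m'') E (1 + C₁ B (1 - 2 E))` with `B = 1 - 2 e^{-β(m''-m₀)}` constant in `m'`. It is
therefore a combination of `E` and `E² = exp (-2(β - a)(x - m₀))`, whose integrals over `(m, ∞)` are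
`H / (β - a)` and `H² / (2(β - a))`.
-/

open MeasureTheory Set Real

section ShiftedExp

variable {c : ℝ} (hc : 0 < c) (m₀ m : ℝ)
include hc

lemma integrableOn_exp_neg_mul_sub_Ioi :
    IntegrableOn (fun x => exp (-c * (x - m₀))) (Ioi m) := by
  refine IntegrableOn.congr_fun ((integrableOn_exp_mul_Ioi (neg_neg_of_pos hc) m).const_mul
    (exp (c * m₀))) (fun x _ => ?_) measurableSet_Ioi
  rw [← exp_add]
  ring_nf

lemma integral_exp_neg_mul_sub_Ioi :
    ∫ x in Ioi m, exp (-c * (x - m₀)) = exp (-c * (m - m₀)) / c := by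
  have hsplit : ∀ x, exp (-c * (x - m₀)) = exp (c * m₀) * exp (-c * x) := fun x => by
    rw [← exp_add]
    ring_nf
  simp_rw [hsplit, integral_const_mul, integral_exp_mul_Ioi (neg_neg_of_pos hc)]
  field_simp

lemma integral_exp_neg_mul_sub_mul_one_add_Ioi (C : ℝ) :
    ∫ x in Ioi m, exp (-c * (x - m₀)) * (1 + C * (1 - 2 * exp (-c * (x - m₀))))
      = (exp (-c * (m - m₀)) + C * exp (-c * (m - m₀)) * (1 - exp (-c * (m - m₀)))) / c := by
  have hsq : ∀ x, exp (-c * (x - m₀)) ^ 2 = exp (-(2 * c) * (x - m₀)) := fun x => by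
    rw [← exp_nat_mul]
    ring_nf
  have hc2 : 0 < 2 * c := by positivity
  have hexpand : ∀ x, exp (-c * (x - m₀)) * (1 + C * (1 - 2 * exp (-c * (x - m₀))))
      = (1 + C) * exp (-c * (x - m₀)) - 2 * C * exp (-(2 * c) * (x - m₀)) := fun x => by
    rw [← hsq]
    ring
  simp_rw [hexpand]
  rw [integral_sub ((integrableOn_exp_neg_mul_sub_Ioi hc m₀ m).const_mul _)
      ((integrableOn_exp_neg_mul_sub_Ioi hc2 m₀ m).const_mul _),
    integral_const_mul, integral_const_mul, integral_exp_neg_mul_sub_Ioi hc,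
    integral_exp_neg_mul_sub_Ioi hc2, ← hsq]
  field_simp
  ring

end ShiftedExp

theorem I_B_formula_general (β a κ C₁ m₀ m : ℝ) (hba : a < β) :
    ∀ m'' : ℝ, m₀ ≤ m'' →
      ∫ m' in Set.Ioi m,
        (β * Real.exp (-β * (m' - m₀))) * (κ * Real.exp (a * (m' - m₀))) *
          ((β * Real.exp (-β * (m'' - m₀))) *
            (1 + C₁ * (1 - 2 * Real.exp (-(β - a) * (m' - m₀)))
                   * (1 - 2 * Real.exp (-β * (m'' - m₀)))))
        = (β * Real.exp (-β * (m'' - m₀))) * (β * κ / (β - a)) *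
            Real.exp (-(β - a) * (m - m₀))
          + (β * Real.exp (-β * (m'' - m₀))) * C₁ *
            (1 - 2 * Real.exp (-β * (m'' - m₀))) * (β * κ / (β - a)) *
            Real.exp (-(β - a) * (m - m₀)) * (1 - Real.exp (-(β - a) * (m - m₀))) := by
  intro m'' _
  have hc : 0 < β - a := sub_pos.mpr hba
  set P := β * Real.exp (-β * (m'' - m₀))
  set B := 1 - 2 * Real.exp (-β * (m'' - m₀))
  have hdensity : ∀ x, Real.exp (-β * (x - m₀)) * Real.exp (a * (x - m₀))
      = Real.exp (-(β - a) * (x - m₀)) := fun x => by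
    rw [← Real.exp_add]
    ring_nf
  have hintegrand : ∀ x, (β * Real.exp (-β * (x - m₀))) * (κ * Real.exp (a * (x - m₀))) *
      (P * (1 + C₁ * (1 - 2 * Real.exp (-(β - a) * (x - m₀))) * B))
      = β * κ * P * (Real.exp (-(β - a) * (x - m₀))
          * (1 + C₁ * B * (1 - 2 * Real.exp (-(β - a) * (x - m₀))))) := fun x => by
    rw [← hdensity]
    ring
  simp_rw [hintegrand]
  rw [integral_const_mul, integral_exp_neg_mul_sub_mul_one_add_Ioi hc]
  field_simp

theorem I_B_formula (β a κ C₁ m₀ m : ℝ) (ha : 0 < a) (hba : a < β) (hκ : 0 < κ)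
    (hC₁ : 0 ≤ C₁) (hC₁' : C₁ < 1) (hm : m₀ ≤ m) :
    ∀ m'' : ℝ, m₀ ≤ m'' →
      ∫ m' in Set.Ioi m,
        (β * Real.exp (-β * (m' - m₀))) * (κ * Real.exp (a * (m' - m₀))) *
          ((β * Real.exp (-β * (m'' - m₀))) *
            (1 + C₁ * (1 - 2 * Real.exp (-(β - a) * (m' - m₀)))
                   * (1 - 2 * Real.exp (-β * (m'' - m₀)))))
        = (β * Real.exp (-β * (m'' - m₀))) * (β * κ / (β - a)) *
            Real.exp (-(β - a) * (m - m₀))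
          + (β * Real.exp (-β * (m'' - m₀))) * C₁ *
            (1 - 2 * Real.exp (-β * (m'' - m₀))) * (β * κ / (β - a)) *
            Real.exp (-(β - a) * (m - m₀)) * (1 - Real.exp (-(β - a) * (m - m₀))) :=
  I_B_formula_general β a κ C₁ m₀ m hba
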